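/- arXiv:2501.04071 — 4 statements merged into one kernel-verified Lean document; each statement's English description precedes it below -/
import Mathlib

section
/- Let b, C_p, C_q, β, α > 0 and exponents 2 < p < 14/3 < q < 6. Set α_V = (b/(12(q−p)))³ · ( q(14−3p)/C_q )^{(14−3p)/(q−p)} · ( p(3q−14)/(β C_p) )^{(3q−14)/(q−p)}. Define φ(t) = (b/4) t^{(14−3p)/2} − (C_q/q) α^{(6−q)/4} t^{3(q−p)/2} for t > 0 and let t̄ = ( q b (14−3p)/(12 C_q (q−p)) )^{2/(3q−14)} α^{(q−6)/(2(3q−14))} be its maximizer. If 0 < α < α_V, then φ(t̄) > (β C_p / p) · α^{(6−p)/4}. -/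
/-!
With `r = 14 - 3p`, `s = 3q - 14`, `d = q - p` (so `r + s = 3d`), `φ(t) = a t^m - K t^n` with
`m = r/2 < n = 3d/2`, and `t̄` is its critical point, `t̄^(n-m) = m a / (n K)`. There
`K t̄^n = (m/n) a t̄^m`, so `φ(t̄) = (b s / (12 d)) t̄^(r/2)`. Both sides of the claim are then
constant multiples of powers of `α`; their ratio is `(α_V / α)^(d/s)`, which exceeds `1`
exactly when `α < α_V`.
-/

open Real

theorem sub_mul_rpow_eq_of_rpow_sub_eq {a K m n t : ℝ} (ht : 0 < t) (hK : K ≠ 0) (hn : n ≠ 0)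
    (hcrit : t ^ (n - m) = m * a / (n * K)) :
    a * t ^ m - K * t ^ n = a * (1 - m / n) * t ^ m := by
  have htn : t ^ n = t ^ m * (m * a / (n * K)) := by
    rw [← hcrit, ← rpow_add ht, add_sub_cancel]
  rw [htn]
  field_simp

theorem mul_rpow_rpow {x y : ℝ} (hx : 0 ≤ x) (hy : 0 ≤ y) (u v w : ℝ) :
    (x ^ u * y ^ v) ^ w = x ^ (u * w) * y ^ (v * w) := by
  rw [mul_rpow (rpow_nonneg hx u) (rpow_nonneg hy v), ← rpow_mul hx, ← rpow_mul hy]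

theorem pow_three_mul_rpow_mul_rpow_rpow {X Y Z r s d : ℝ} (hX : 0 < X) (hY : 0 ≤ Y)
    (hZ : 0 ≤ Z) (hs : s ≠ 0) (hd : d ≠ 0) (hrsd : r + s = 3 * d) :
    (X ^ (3 : ℕ) * Y ^ (r / d) * Z ^ (s / d)) ^ (d / s) = (Y * X) ^ (r / s) * X * Z := by
  have hX3 : X ^ (3 : ℕ) = X ^ (r / d + s / d) := by
    rw [← rpow_natCast, ← add_div, hrsd]
    field_simp
    norm_num
  rw [hX3, rpow_add hX, mul_rpow (by positivity) (by positivity),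
    mul_rpow (by positivity) (by positivity), mul_rpow (by positivity) (by positivity),
    ← rpow_mul hX.le, ← rpow_mul hX.le, ← rpow_mul hY, ← rpow_mul hZ,
    mul_rpow hY hX.le]
  have hrd : r / d * (d / s) = r / s := by field_simp
  have hsd : s / d * (d / s) = 1 := by field_simp
  rw [hrd, hsd, rpow_one, rpow_one]
  ring

theorem stmt_3_general (b Cp Cq β α p q : ℝ) (hb : 0 < b) (hCp : 0 < Cp) (hCq : 0 < Cq)
    (hβ : 0 < β) (hα : 0 < α)
    (hp : 2 < p) (hp' : p < 14 / 3) (hq : 14 / 3 < q)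
    (αV : ℝ)
    (hαV : αV = (b / (12 * (q - p))) ^ (3 : ℕ)
        * (q * (14 - 3 * p) / Cq) ^ ((14 - 3 * p) / (q - p))
        * (p * (3 * q - 14) / (β * Cp)) ^ ((3 * q - 14) / (q - p)))
    (φ : ℝ → ℝ)
    (hφ : φ = fun t => b / 4 * t ^ ((14 - 3 * p) / 2)
        - Cq / q * α ^ ((6 - q) / 4) * t ^ (3 * (q - p) / 2))
    (tbar : ℝ)
    (htbar : tbar = (q * b * (14 - 3 * p) / (12 * Cq * (q - p))) ^ (2 / (3 * q - 14))
        * α ^ ((q - 6) / (2 * (3 * q - 14))))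
    (hαlt : α < αV) :
    β * Cp / p * α ^ ((6 - p) / 4) < φ tbar := by
  set r := 14 - 3 * p with hr
  set s := 3 * q - 14 with hs
  set d := q - p with hd
  have hr0 : 0 < r := by linarith
  have hs0 : 0 < s := by linarith
  have hd0 : 0 < d := by linarith
  set A := q * b * r / (12 * Cq * d) with hA
  have hA0 : 0 < A := by positivity
  have htbar_pow (w : ℝ) : tbar ^ w = A ^ (2 / s * w) * α ^ ((q - 6) / (2 * s) * w) := by
    rw [htbar, mul_rpow_rpow hA0.le hα.le]
  have hcrit : tbar ^ (3 * d / 2 - r / 2)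
      = r / 2 * (b / 4) / (3 * d / 2 * (Cq / q * α ^ ((6 - q) / 4))) := by
    rw [htbar_pow, show 2 / s * (3 * d / 2 - r / 2) = 1 by field_simp; ring,
      show (q - 6) / (2 * s) * (3 * d / 2 - r / 2) = -((6 - q) / 4) by field_simp; ring,
      rpow_one, rpow_neg hα.le, hA]
    field_simp
    ring
  have hφtbar : φ tbar = b * s / (12 * d) * (A ^ (r / s) * α ^ ((q - 6) * r / (4 * s))) := by
    simp only [hφ]
    rw [sub_mul_rpow_eq_of_rpow_sub_eq (by rw [htbar]; positivity) (by positivity)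
      (by positivity) hcrit, htbar_pow, show 2 / s * (r / 2) = r / s by field_simp,
      show (q - 6) / (2 * s) * (r / 2) = (q - 6) * r / (4 * s) by field_simp; ring]
    field_simp
    ring
  have hαV_pow : αV ^ (d / s) = A ^ (r / s) * (b / (12 * d)) * (p * s / (β * Cp)) := by
    rw [hαV, pow_three_mul_rpow_mul_rpow_rpow (by positivity) (by positivity) (by positivity)
      hs0.ne' hd0.ne' (by ring), hA]
    field_simp
  calc β * Cp / p * α ^ ((6 - p) / 4)
      = β * Cp / p * α ^ (d / s) * α ^ ((q - 6) * r / (4 * s)) := by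
        rw [mul_assoc, ← rpow_add hα]
        congr 2
        field_simp
        rw [hr, hs, hd]
        ring
    _ < β * Cp / p * αV ^ (d / s) * α ^ ((q - 6) * r / (4 * s)) := by
        gcongr
    _ = φ tbar := by
        rw [hαV_pow, hφtbar]
        field_simp

/-- Key estimate (3.1): if `0 < α < α_V`, then the maximum value `φ(t̄)` of the
auxiliary function `φ` strictly exceeds `(β C_p / p) α^{(6-p)/4}`. -/
theorem stmt_3 (b Cp Cq β α p q : ℝ) (hb : 0 < b) (hCp : 0 < Cp) (hCq : 0 < Cq)
    (hβ : 0 < β) (hα : 0 < α)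
    (hp : 2 < p) (hp' : p < 14 / 3) (hq : 14 / 3 < q) (hq' : q < 6)
    (αV : ℝ)
    (hαV : αV = (b / (12 * (q - p))) ^ (3 : ℕ)
        * (q * (14 - 3 * p) / Cq) ^ ((14 - 3 * p) / (q - p))
        * (p * (3 * q - 14) / (β * Cp)) ^ ((3 * q - 14) / (q - p)))
    (φ : ℝ → ℝ)
    (hφ : φ = fun t => b / 4 * t ^ ((14 - 3 * p) / 2)
        - Cq / q * α ^ ((6 - q) / 4) * t ^ (3 * (q - p) / 2))
    (tbar : ℝ)
    (htbar : tbar = (q * b * (14 - 3 * p) / (12 * Cq * (q - p))) ^ (2 / (3 * q - 14))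
        * α ^ ((q - 6) / (2 * (3 * q - 14))))
    (hαlt : α < αV) :
    β * Cp / p * α ^ ((6 - p) / 4) < φ tbar :=
  stmt_3_general b Cp Cq β α p q hb hCp hCq hβ hα hp hp' hq αV hαV φ hφ tbar htbar hαlt
end

section
/- Let a', b, β, C_p, C_q > 0, let 2 < p < 10/3 and 14/3 < q < 6, and let 0 < α < α_V where α_V = (b/(12(q−p)))³ ( q(14−3p)/C_q )^{(14−3p)/(q−p)} ( p(3q−14)/(β C_p) )^{(3q−14)/(q−p)}. Define h(t) = (a'/2) t² + (b/4) t⁴ − (β C_p/p) α^{(6−p)/4} t^{3(p−2)/2} − (C_q/q) α^{(6−q)/4} t^{3(q−2)/2} for t > 0. Then h attains a global maximum at positive level, and there exist three positive constants R₁ < T_α < R₂ such that h(R₁) = h(R₂) = 0, h(t) > 0 for all t ∈ (R₁, R₂), and h(T_α) = max_{t>0} h(t) > 0. -/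
/-!
The function `h` is negative near `0`, where `t ^ (3(p-2)/2)` with `3(p-2)/2 < 2` dominates, and
near `∞`, where `t ^ (3(q-2)/2)` with `3(q-2)/2 > 4` dominates. Hence one positive value of `h`
yields a positive global maximum `Tα` on `(0, ∞)`, and `R₁`, `R₂` are the last zero before `Tα`
and the first zero after it. For `h(t) > 0` it suffices that the two negative terms, divided by
`t ^ 4`, are below `b / 4` for some `t`; by weighted AM-GM their minimum over `t` is a constant times
`α ^ (1/3)`, and `α_V` is exactly the mass at which this minimum reaches `b / 4`.
-/

open Real Filter Set Topology

section CrossingZero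

variable {f : ℝ → ℝ} {a b : ℝ}

theorem exists_zero_Ico_forall_Ioc_pos (hab : a ≤ b) (hf : ContinuousOn f (Icc a b))
    (ha : f a ≤ 0) (hb : 0 < f b) : ∃ c ∈ Ico a b, f c = 0 ∧ ∀ t ∈ Ioc c b, 0 < f t := by
  have hK : IsCompact (Icc a b ∩ f ⁻¹' Iic 0) :=
    isCompact_Icc.of_isClosed_subset
      (hf.preimage_isClosed_of_isClosed isClosed_Icc isClosed_Iic) inter_subset_left
  obtain ⟨c, ⟨⟨hac, hcb⟩, hfc⟩, hc⟩ := hK.exists_isGreatest ⟨a, ⟨le_rfl, hab⟩, ha⟩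
  have hcb : c < b := hcb.lt_of_ne fun h => (h ▸ hfc : f b ≤ 0).not_gt hb
  have hpos : ∀ t ∈ Ioc c b, 0 < f t := fun t ht =>
    lt_of_not_ge fun h => (hc ⟨⟨hac.trans ht.1.le, ht.2⟩, h⟩).not_gt ht.1
  have hlim : Tendsto f (𝓝[>] c) (𝓝 (f c)) := by
    rw [← nhdsWithin_Ioc_eq_nhdsGT hcb]
    exact (hf c ⟨hac, hcb.le⟩).mono (Ioc_subset_Icc_self.trans (Icc_subset_Icc_left hac))
  have hfc' : 0 ≤ f c :=
    ge_of_tendsto hlim (eventually_of_mem (Ioc_mem_nhdsGT hcb) fun t ht => (hpos t ht).le)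
  exact ⟨c, ⟨hac, hcb⟩, le_antisymm hfc hfc', hpos⟩

theorem exists_zero_Ioc_forall_Ico_pos (hab : a ≤ b) (hf : ContinuousOn f (Icc a b))
    (ha : 0 < f a) (hb : f b ≤ 0) : ∃ c ∈ Ioc a b, f c = 0 ∧ ∀ t ∈ Ico a c, 0 < f t := by
  have hf' : ContinuousOn (fun t => f (-t)) (Icc (-b) (-a)) :=
    hf.comp continuousOn_neg fun t ht => ⟨le_neg_of_le_neg ht.2, neg_le_of_neg_le ht.1⟩
  obtain ⟨c, hc, hfc, hpos⟩ :=
    exists_zero_Ico_forall_Ioc_pos (neg_le_neg hab) hf' (by simpa using hb) (by simpa using ha)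
  refine ⟨-c, ⟨lt_neg_of_lt_neg hc.2, neg_le.mpr hc.1⟩, hfc, fun t ht => ?_⟩
  simpa using hpos (-t) ⟨lt_neg_of_lt_neg ht.2, neg_le_neg ht.1⟩

end CrossingZero

section PositiveMaximum

variable {f : ℝ → ℝ}

theorem exists_forall_le_of_eventually_neg (hf : ContinuousOn f (Ioi 0))
    (h0 : ∀ᶠ t in 𝓝[>] 0, f t < 0) (hinf : ∀ᶠ t in atTop, f t < 0) {t₀ : ℝ} (ht₀ : 0 < t₀)
    (hft₀ : 0 < f t₀) : ∃ T, 0 < T ∧ ∀ t, 0 < t → f t ≤ f T := by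
  obtain ⟨t₁, ht₁, hneg₁⟩ := mem_nhdsGT_iff_exists_Ioc_subset.mp h0
  obtain ⟨t₂, hneg₂⟩ := eventually_atTop.mp hinf
  have ht₁₀ : t₁ < t₀ := lt_of_not_ge fun h => (hneg₁ ⟨ht₀, h⟩).not_gt hft₀
  have ht₀₂ : t₀ < t₂ := lt_of_not_ge fun h => (hneg₂ t₀ h).not_gt hft₀
  obtain ⟨T, hT, hmax⟩ := isCompact_Icc.exists_isMaxOn ⟨t₀, ht₁₀.le, ht₀₂.le⟩
    (hf.mono fun t ht => lt_of_lt_of_le (mem_Ioi.mp ht₁) ht.1)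
  have hfT : f t₀ ≤ f T := hmax ⟨ht₁₀.le, ht₀₂.le⟩
  refine ⟨T, lt_of_lt_of_le (mem_Ioi.mp ht₁) hT.1, fun t ht => ?_⟩
  rcases le_or_gt t t₁ with h₁ | h₁
  · linarith [show f t < 0 from hneg₁ ⟨ht, h₁⟩]
  rcases le_or_gt t₂ t with h₂ | h₂
  · linarith [hneg₂ t h₂]
  exact hmax ⟨h₁.le, h₂.le⟩

theorem exists_zeros_around_max (hf : ContinuousOn f (Ioi 0))
    (h0 : ∀ᶠ t in 𝓝[>] 0, f t < 0) (hinf : ∀ᶠ t in atTop, f t < 0) {t₀ : ℝ} (ht₀ : 0 < t₀)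
    (hft₀ : 0 < f t₀) :
    ∃ R₁ T R₂ : ℝ, 0 < R₁ ∧ R₁ < T ∧ T < R₂ ∧ f R₁ = 0 ∧ f R₂ = 0 ∧
      (∀ t : ℝ, R₁ < t → t < R₂ → 0 < f t) ∧ (∀ t : ℝ, 0 < t → f t ≤ f T) ∧ 0 < f T := by
  obtain ⟨T, hT, hmax⟩ := exists_forall_le_of_eventually_neg hf h0 hinf ht₀ hft₀
  have hfT : 0 < f T := hft₀.trans_le (hmax t₀ ht₀)
  obtain ⟨t₁, hft₁, ht₁, ht₁T⟩ := (h0.and (Ioo_mem_nhdsGT hT)).exists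
  obtain ⟨t₂, hTt₂, hft₂⟩ := ((eventually_gt_atTop T).and hinf).exists
  obtain ⟨R₁, ⟨ht₁R₁, hR₁T⟩, hfR₁, hpos₁⟩ := exists_zero_Ico_forall_Ioc_pos ht₁T.le
    (hf.mono fun t ht => ht₁.trans_le ht.1) hft₁.le hfT
  obtain ⟨R₂, ⟨hTR₂, -⟩, hfR₂, hpos₂⟩ := exists_zero_Ioc_forall_Ico_pos hTt₂.le
    (hf.mono fun t ht => hT.trans_le ht.1) hfT hft₂.le
  refine ⟨R₁, T, R₂, ht₁.trans_le ht₁R₁, hR₁T, hTR₂, hfR₁, hfR₂, fun t h₁ h₂ => ?_, hmax, hfT⟩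
  rcases le_or_gt t T with h | h
  · exact hpos₁ t ⟨h₁, h⟩
  · exact hpos₂ t ⟨h.le, h₂⟩

end PositiveMaximum

theorem rpow_mul_rpow_sub {t : ℝ} (ht : 0 < t) (x y : ℝ) : t ^ x * t ^ (y - x) = t ^ y := by
  rw [← rpow_add ht, add_sub_cancel]

theorem exists_mul_rpow_neg_add_mul_rpow_eq {A B m v : ℝ} (hA : 0 < A) (hB : 0 < B)
    (hm : 0 < m) (hv : 0 < v) :
    ∃ τ, 0 < τ ∧ A * τ ^ (-m) + B * τ ^ v
      = (m + v) * (A / v) ^ (v / (m + v)) * (B / m) ^ (m / (m + v)) := by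
  set K := (A / v) ^ (v / (m + v)) * (B / m) ^ (m / (m + v))
  have hmv : 0 < m + v := by positivity
  -- `τ` balances the two terms: `A * τ ^ (-m) / v = B * τ ^ v / m = K`.
  refine ⟨(A / v / (B / m)) ^ (1 / (m + v)), by positivity, ?_⟩
  have h1 : A * ((A / v / (B / m)) ^ (1 / (m + v))) ^ (-m) = v * K := by
    refine log_injOn_pos (by simp only [mem_Ioi]; positivity) (by simp only [mem_Ioi]; positivity) ?_
    simp (disch := positivity) only [K, log_mul, log_div, log_rpow]
    field_simp
    ring
  have h2 : B * ((A / v / (B / m)) ^ (1 / (m + v))) ^ v = m * K := by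
    refine log_injOn_pos (by simp only [mem_Ioi]; positivity) (by simp only [mem_Ioi]; positivity) ?_
    simp (disch := positivity) only [K, log_mul, log_div, log_rpow]
    field_simp
    ring
  rw [h1, h2]
  ring

/-- The minimum of `A * t ^ (r - 4) + B * t ^ (s - 4)` over `t > 0`, the value at the equality case
of weighted AM-GM in `exists_mul_rpow_neg_add_mul_rpow_eq` with `m = 4 - r`, `v = s - 4`. -/
noncomputable def powerSumMin (A B r s : ℝ) : ℝ :=
  (s - r) * (A / (s - 4)) ^ ((s - 4) / (s - r)) * (B / (4 - r)) ^ ((4 - r) / (s - r))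

noncomputable def kirchhoffBound (a b A B r s t : ℝ) : ℝ :=
  a / 2 * t ^ 2 + b / 4 * t ^ 4 - A * t ^ r - B * t ^ s

namespace kirchhoffBound

variable {a b A B r s : ℝ}

theorem comm : kirchhoffBound a b A B r s = kirchhoffBound a b B A s r := by
  ext t
  simp only [kirchhoffBound]
  ring

theorem continuousOn : ContinuousOn (kirchhoffBound a b A B r s) (Ioi 0) := by
  intro t ht
  have ht : t ≠ 0 := ne_of_gt ht
  unfold kirchhoffBound
  fun_prop (disch := exact Or.inl ht)

theorem le_rpow_mul {t : ℝ} (ht : 0 < t) (hB : 0 ≤ B) :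
    kirchhoffBound a b A B r s t ≤ t ^ r * (a / 2 * t ^ (2 - r) + b / 4 * t ^ (4 - r) - A) := by
  have h2 := rpow_mul_rpow_sub ht r 2
  have h4 := rpow_mul_rpow_sub ht r 4
  norm_cast at h2 h4
  have : 0 ≤ B * t ^ s := by positivity
  unfold kirchhoffBound
  rw [← h2, ← h4]
  linarith

theorem eventually_neg_nhdsGT (hA : 0 < A) (hB : 0 ≤ B) (hr : r < 2) :
    ∀ᶠ t in 𝓝[>] 0, kirchhoffBound a b A B r s t < 0 := by
  have hcont : ContinuousAt (fun t : ℝ => a / 2 * t ^ (2 - r) + b / 4 * t ^ (4 - r) - A) 0 := by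
    have h2 : 0 ≤ 2 - r := by linarith
    have h4 : 0 ≤ 4 - r := by linarith
    fun_prop (disch := first | exact Or.inr h2 | exact Or.inr h4)
  have hlim : Tendsto (fun t : ℝ => a / 2 * t ^ (2 - r) + b / 4 * t ^ (4 - r) - A) (𝓝[>] 0)
      (𝓝 (-A)) := by
    have := hcont.tendsto
    rw [zero_rpow (by linarith), zero_rpow (by linarith), mul_zero, mul_zero, zero_add,
      zero_sub] at this
    exact this.mono_left nhdsWithin_le_nhds
  filter_upwards [hlim.eventually_lt_const (neg_neg_of_pos hA), self_mem_nhdsWithin]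
    with t hneg ht
  exact (le_rpow_mul ht hB).trans_lt (mul_neg_of_pos_of_neg (rpow_pos_of_pos ht r) hneg)

theorem eventually_neg_atTop (hA : 0 ≤ A) (hB : 0 < B) (hs : 4 < s) :
    ∀ᶠ t in atTop, kirchhoffBound a b A B r s t < 0 := by
  have h2 := tendsto_rpow_neg_atTop (y := s - 2) (by linarith)
  have h4 := tendsto_rpow_neg_atTop (y := s - 4) (by linarith)
  rw [neg_sub] at h2 h4
  have hlim : Tendsto (fun t : ℝ => a / 2 * t ^ (2 - s) + b / 4 * t ^ (4 - s) - B) atTop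
      (𝓝 (-B)) := by
    simpa using ((h2.const_mul (a / 2)).add (h4.const_mul (b / 4))).sub_const B
  rw [comm]
  filter_upwards [hlim.eventually_lt_const (neg_neg_of_pos hB), eventually_gt_atTop 0]
    with t hneg ht
  exact (le_rpow_mul ht hA).trans_lt (mul_neg_of_pos_of_neg (rpow_pos_of_pos ht s) hneg)

theorem exists_pos (ha : 0 ≤ a) (hA : 0 < A) (hB : 0 < B) (hr : r < 4) (hs : 4 < s)
    (hmin : powerSumMin A B r s < b / 4) : ∃ t, 0 < t ∧ 0 < kirchhoffBound a b A B r s t := by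
  obtain ⟨t, ht, heq⟩ := exists_mul_rpow_neg_add_mul_rpow_eq hA hB (sub_pos.2 hr) (sub_pos.2 hs)
  rw [neg_sub, show 4 - r + (s - 4) = s - r by ring] at heq
  have hr' := rpow_mul_rpow_sub ht 4 r
  have hs' := rpow_mul_rpow_sub ht 4 s
  norm_cast at hr' hs'
  have hsplit : A * t ^ r + B * t ^ s = t ^ 4 * powerSumMin A B r s := by
    rw [← hr', ← hs', powerSumMin, ← heq]
    ring
  have hgap : 0 < t ^ 4 * (b / 4 - powerSumMin A B r s) := mul_pos (by positivity) (sub_pos.2 hmin)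
  have ht2 : 0 ≤ a / 2 * t ^ 2 := by positivity
  refine ⟨t, ht, ?_⟩
  unfold kirchhoffBound
  linarith

end kirchhoffBound

noncomputable def criticalMass (b β Cp Cq p q : ℝ) : ℝ :=
  (b / (12 * (q - p))) ^ (3 : ℕ)
    * (q * (14 - 3 * p) / Cq) ^ ((14 - 3 * p) / (q - p))
    * (p * (3 * q - 14) / (β * Cp)) ^ ((3 * q - 14) / (q - p))

theorem powerSumMin_pow_three_mul_criticalMass {b β Cp Cq α p q : ℝ} (hb : 0 < b) (hβ : 0 < β)
    (hCp : 0 < Cp) (hCq : 0 < Cq) (hα : 0 < α) (hp : 0 < p) (hp' : 3 * p < 14)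
    (hq : 14 < 3 * q) :
    powerSumMin (β * Cp / p * α ^ ((6 - p) / 4)) (Cq / q * α ^ ((6 - q) / 4))
        (3 * (p - 2) / 2) (3 * (q - 2) / 2) ^ 3 * criticalMass b β Cp Cq p q
      = (b / 4) ^ 3 * α := by
  have hq0 : 0 < q := by linarith
  have hm : 0 < 14 - 3 * p := by linarith
  have hv : 0 < 3 * q - 14 := by linarith
  have hD : 0 < q - p := by linarith
  rw [powerSumMin, criticalMass, show 3 * (q - 2) / 2 - 3 * (p - 2) / 2 = 3 * (q - p) / 2 by ring,
    show 3 * (q - 2) / 2 - 4 = (3 * q - 14) / 2 by ring,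
    show 4 - 3 * (p - 2) / 2 = (14 - 3 * p) / 2 by ring]
  refine log_injOn_pos (by simp only [mem_Ioi]; positivity) (by simp only [mem_Ioi]; positivity) ?_
  have h12 : log 12 = log 3 + log 4 := by rw [← log_mul] <;> norm_num
  simp (disch := positivity) only [log_mul, log_div, log_rpow, log_pow, h12]
  field_simp
  ring

theorem powerSumMin_lt_of_lt_criticalMass {b β Cp Cq α p q : ℝ} (hb : 0 < b) (hβ : 0 < β)
    (hCp : 0 < Cp) (hCq : 0 < Cq) (hα : 0 < α) (hp : 0 < p) (hp' : 3 * p < 14)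
    (hq : 14 < 3 * q) (hαV : α < criticalMass b β Cp Cq p q) :
    powerSumMin (β * Cp / p * α ^ ((6 - p) / 4)) (Cq / q * α ^ ((6 - q) / 4))
      (3 * (p - 2) / 2) (3 * (q - 2) / 2) < b / 4 := by
  have hcube := powerSumMin_pow_three_mul_criticalMass hb hβ hCp hCq hα hp hp' hq
  refine lt_of_pow_lt_pow_left₀ 3 (by positivity) (lt_of_mul_lt_mul_right ?_ (hα.trans hαV).le)
  rw [hcube]
  exact mul_lt_mul_of_pos_left hαV (by positivity)

theorem stmt_4_general (a' b β Cp Cq α p q : ℝ) (ha' : 0 < a') (hb : 0 < b) (hβ : 0 < β)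
    (hCp : 0 < Cp) (hCq : 0 < Cq)
    (hp : 2 < p) (hp' : p < 10 / 3) (hq : 14 / 3 < q)
    (αV : ℝ)
    (hαV : αV = (b / (12 * (q - p))) ^ (3 : ℕ)
        * (q * (14 - 3 * p) / Cq) ^ ((14 - 3 * p) / (q - p))
        * (p * (3 * q - 14) / (β * Cp)) ^ ((3 * q - 14) / (q - p)))
    (hα : 0 < α) (hαlt : α < αV)
    (h : ℝ → ℝ)
    (hh : h = fun t => a' / 2 * t ^ (2 : ℕ) + b / 4 * t ^ (4 : ℕ)
        - β * Cp / p * α ^ ((6 - p) / 4) * t ^ (3 * (p - 2) / 2)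
        - Cq / q * α ^ ((6 - q) / 4) * t ^ (3 * (q - 2) / 2)) :
    ∃ R₁ Tα R₂ : ℝ, 0 < R₁ ∧ R₁ < Tα ∧ Tα < R₂ ∧
      h R₁ = 0 ∧ h R₂ = 0 ∧
      (∀ t : ℝ, R₁ < t → t < R₂ → 0 < h t) ∧
      (∀ t : ℝ, 0 < t → h t ≤ h Tα) ∧
      0 < h Tα := by
  have hp0 : 0 < p := by linarith
  have hq0 : 0 < q := by linarith
  have hh : h = kirchhoffBound a' b (β * Cp / p * α ^ ((6 - p) / 4)) (Cq / q * α ^ ((6 - q) / 4))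
      (3 * (p - 2) / 2) (3 * (q - 2) / 2) := hh
  have hmin := powerSumMin_lt_of_lt_criticalMass hb hβ hCp hCq hα hp0 (by linarith) (by linarith)
    (hαV ▸ hαlt)
  obtain ⟨t₀, ht₀, hpos⟩ := kirchhoffBound.exists_pos ha'.le (by positivity) (by positivity)
    (by linarith) (by linarith) hmin
  subst hh
  exact exists_zeros_around_max kirchhoffBound.continuousOn
    (kirchhoffBound.eventually_neg_nhdsGT (by positivity) (by positivity) (by linarith))
    (kirchhoffBound.eventually_neg_atTop (by positivity) (by positivity) (by linarith)) ht₀ hpos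

/-- Lemma 3.1: for `0 < α < α_V` the function
`h(t) = (a'/2)t² + (b/4)t⁴ - (βC_p/p)α^{(6-p)/4} t^{3(p-2)/2} - (C_q/q)α^{(6-q)/4} t^{3(q-2)/2}`
has a global maximum at positive level, and there are `0 < R₁ < T_α < R₂` with
`h(R₁) = h(R₂) = 0`, `h > 0` on `(R₁, R₂)`, and `h(T_α) = max_{t>0} h(t) > 0`. -/
theorem stmt_4 (a' b β Cp Cq α p q : ℝ) (ha' : 0 < a') (hb : 0 < b) (hβ : 0 < β)
    (hCp : 0 < Cp) (hCq : 0 < Cq)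
    (hp : 2 < p) (hp' : p < 10 / 3) (hq : 14 / 3 < q) (hq' : q < 6)
    (αV : ℝ)
    (hαV : αV = (b / (12 * (q - p))) ^ (3 : ℕ)
        * (q * (14 - 3 * p) / Cq) ^ ((14 - 3 * p) / (q - p))
        * (p * (3 * q - 14) / (β * Cp)) ^ ((3 * q - 14) / (q - p)))
    (hα : 0 < α) (hαlt : α < αV)
    (h : ℝ → ℝ)
    (hh : h = fun t => a' / 2 * t ^ (2 : ℕ) + b / 4 * t ^ (4 : ℕ)
        - β * Cp / p * α ^ ((6 - p) / 4) * t ^ (3 * (p - 2) / 2)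
        - Cq / q * α ^ ((6 - q) / 4) * t ^ (3 * (q - 2) / 2)) :
    ∃ R₁ Tα R₂ : ℝ, 0 < R₁ ∧ R₁ < Tα ∧ Tα < R₂ ∧
      h R₁ = 0 ∧ h R₂ = 0 ∧
      (∀ t : ℝ, R₁ < t → t < R₂ → 0 < h t) ∧
      (∀ t : ℝ, 0 < t → h t ≤ h Tα) ∧
      0 < h Tα :=
  stmt_4_general a' b β Cp Cq α p q ha' hb hβ hCp hCq hp hp' hq αV hαV hα hαlt h hh
end

section
/- Let a, b > 0, exponents 2 < p < q with 14/3 < q < 6, β ≤ 0, s ∈ [1/2, 1], and α, K₁, K₂ ≥ 0. Let G, Q, P, D ≥ 0 and I, W, m ∈ ℝ satisfy |I| ≤ K₁ α, |W| ≤ K₂ α, together with the two identities: (a/2) G + (b/4) G² + (1/2) I − (s/q) Q − (β/p) P = m, and (1/3)(a + bG) G − (1/6) D − (1/6) W = ((q−2)s/(2q)) Q + (β(p−2)/(2p)) P. Then ((3q−10)/12) a G ≤ ((q−2)/2) m + α ( K₂/6 + ((q−2)/4) K₁ ); equivalently G ≤ (12/(a(3q−10))) ( ((q−2)/2) m + α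 ( K₂/6 + ((q−2)/4) K₁ ) ). -/
set_option maxHeartbeats 1000000


/-- Algebraic core of Lemma 5.3 (a priori bound, case `β ≤ 0`): from the energy
identity and the Pohozaev combination one deduces
`((3q-10)/12) a G ≤ ((q-2)/2) m + α (K₂/6 + ((q-2)/4) K₁)`, equivalently the
stated bound on `G`. -/
theorem stmt_11 (a b p q β s α K₁ K₂ G Q P D I W m : ℝ)
    (ha : 0 < a) (hb : 0 < b)
    (hp : 2 < p) (hpq : p < q) (hq : 14 / 3 < q) (hq' : q < 6)
    (hβ : β ≤ 0) (hs : 1 / 2 ≤ s) (hs' : s ≤ 1)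
    (hα : 0 ≤ α) (hK₁ : 0 ≤ K₁) (hK₂ : 0 ≤ K₂)
    (hG : 0 ≤ G) (hQ : 0 ≤ Q) (hP : 0 ≤ P) (hD : 0 ≤ D)
    (hI : |I| ≤ K₁ * α) (hW : |W| ≤ K₂ * α)
    (h1 : a / 2 * G + b / 4 * G ^ 2 + 1 / 2 * I - s / q * Q - β / p * P = m)
    (h2 : 1 / 3 * (a + b * G) * G - 1 / 6 * D - 1 / 6 * W
        = (q - 2) * s / (2 * q) * Q + β * (p - 2) / (2 * p) * P) :
    (3 * q - 10) / 12 * a * G ≤ (q - 2) / 2 * m + α * (K₂ / 6 + (q - 2) / 4 * K₁) ∧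
    G ≤ 12 / (a * (3 * q - 10)) * ((q - 2) / 2 * m + α * (K₂ / 6 + (q - 2) / 4 * K₁)) := by
  have hq0 : (0:ℝ) < q := by linarith
  have hp0 : (0:ℝ) < p := by linarith
  obtain ⟨hI1, hI2⟩ := abs_le.mp hI
  obtain ⟨hW1, hW2⟩ := abs_le.mp hW
  have e1 : (q - 2) * s / (2 * q) * Q = (q - 2) / 2 * (s / q * Q) := by
    field_simp
  have e2 : β * (p - 2) / (2 * p) * P = (p - 2) / 2 * (β / p * P) := by
    field_simp
  rw [e1, e2] at h2
  have key : (q-2)/2 * m = (3*q-10)/12 * a * G + (3*q-14)/24 * b * G^2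
      + (q-2)/4 * I + (p-q)/2 * (β/p * P) + 1/6*D + 1/6*W := by
    linear_combination (-(q-2)/2) * h1 + h2
  have hbG : 0 ≤ (3*q-14)/24 * b * G^2 :=
    mul_nonneg (mul_nonneg (by linarith) hb.le) (by positivity)
  have hY : β/p * P ≤ 0 :=
    mul_nonpos_of_nonpos_of_nonneg (div_nonpos_of_nonpos_of_nonneg hβ hp0.le) hP
  have hβP : 0 ≤ (p-q)/2 * (β/p * P) := by
    have h := mul_nonneg (show (0:ℝ) ≤ (q-p)/2 by linarith) (neg_nonneg.mpr hY)
    nlinarith [h]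
  have t1 : -((q-2)/4 * (K₁*α)) ≤ (q-2)/4 * I := by
    have h := mul_le_mul_of_nonneg_left hI1 (show (0:ℝ) ≤ (q-2)/4 by linarith)
    nlinarith [h]
  have erhs : α * (K₂ / 6 + (q - 2) / 4 * K₁) = 1/6*(K₂*α) + (q-2)/4 * (K₁*α) := by ring
  have first : (3 * q - 10) / 12 * a * G ≤ (q - 2) / 2 * m + α * (K₂ / 6 + (q - 2) / 4 * K₁) := by
    rw [erhs]; linarith only [key, hbG, hβP, t1, hW1, hD]
  refine ⟨first, ?_⟩
  have hA : 0 < a * (3*q-10) := mul_pos ha (by linarith)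
  rw [div_mul_eq_mul_div, le_div_iff₀ hA]
  have e3 : G * (a * (3*q-10)) = 12 * ((3*q-10)/12 * a * G) := by ring
  linarith only [first, e3]
end

section
/- Let a, b > 0, exponents 2 < p < 14/3 < q < 6, β > 0, s ∈ [1/2, 1], C_p > 0, and α, K₁, K₂ ≥ 0. Let G, Q, P, D ≥ 0 and I, W, m ∈ ℝ satisfy |I| ≤ K₁ α, |W| ≤ K₂ α, P ≤ C_p α^{(6−p)/4} G^{3(p−2)/4}, together with the two identities: (a/2) G + (b/4) G² + (1/2) I − s ( (1/q) Q + (β/p) P ) = m, and (1/3)(a + bG) G − (1/6) D − (1/6) W = ((q−2)s/(2q)) Q + (β(p−2)s/(2p)) P. Then ((3q−14)/24) b G² ≤ ((q−2)/2) m + ( s β (q−p) C_p / (2p) ) α^{(6−p)/4} G^{3(p−2)/4} + α ( ((q−2)/4) K₁ + K₂/6 ). -/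
/-- Algebraic core of Lemma 4.3 (a priori bound, case `β > 0`): from the energy
identity, the Pohozaev combination and the Gagliardo–Nirenberg bound on `P` one
deduces `((3q-14)/24) b G² ≤ ((q-2)/2) m + (sβ(q-p)C_p/(2p)) α^{(6-p)/4} G^{3(p-2)/4}
 + α (((q-2)/4) K₁ + K₂/6)`. -/
theorem stmt_12 (a b p q β s Cp α K₁ K₂ G Q P D I W m : ℝ)
    (ha : 0 < a) (hb : 0 < b)
    (hp : 2 < p) (hp' : p < 14 / 3) (hq : 14 / 3 < q) (hq' : q < 6)
    (hβ : 0 < β) (hs : 1 / 2 ≤ s) (hs' : s ≤ 1) (hCp : 0 < Cp)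
    (hα : 0 ≤ α) (hK₁ : 0 ≤ K₁) (hK₂ : 0 ≤ K₂)
    (hG : 0 ≤ G) (hQ : 0 ≤ Q) (hP : 0 ≤ P) (hD : 0 ≤ D)
    (hI : |I| ≤ K₁ * α) (hW : |W| ≤ K₂ * α)
    (hGN : P ≤ Cp * α ^ ((6 - p) / 4) * G ^ (3 * (p - 2) / 4))
    (h1 : a / 2 * G + b / 4 * G ^ 2 + 1 / 2 * I - s * (1 / q * Q + β / p * P) = m)
    (h2 : 1 / 3 * (a + b * G) * G - 1 / 6 * D - 1 / 6 * W
        = (q - 2) * s / (2 * q) * Q + β * (p - 2) * s / (2 * p) * P) :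
    (3 * q - 14) / 24 * b * G ^ 2
      ≤ (q - 2) / 2 * m + s * β * (q - p) * Cp / (2 * p) * α ^ ((6 - p) / 4) * G ^ (3 * (p - 2) / 4)
        + α * ((q - 2) / 4 * K₁ + K₂ / 6) := by
  have hq0 : q ≠ 0 := by linarith
  have hp0 : p ≠ 0 := by linarith
  have key : (3 * q - 14) / 24 * b * G ^ 2
      = (q - 2) / 2 * m - a * (3 * q - 10) / 12 * G - (q - 2) / 4 * I - D / 6 - W / 6
        + s * β * (q - p) / (2 * p) * P := by
    linear_combination ((q - 2) / 2) * h1 - h2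
  have hc : 0 ≤ s * β * (q - p) / (2 * p) := by
    apply div_nonneg
    · apply mul_nonneg (mul_nonneg (by linarith) hβ.le) (by linarith)
    · linarith
  have hP3 : s * β * (q - p) / (2 * p) * P
      ≤ s * β * (q - p) * Cp / (2 * p) * α ^ ((6 - p) / 4) * G ^ (3 * (p - 2) / 4) := by
    have := mul_le_mul_of_nonneg_left hGN hc
    calc s * β * (q - p) / (2 * p) * P
        ≤ s * β * (q - p) / (2 * p) * (Cp * α ^ ((6 - p) / 4) * G ^ (3 * (p - 2) / 4)) := this
      _ = s * β * (q - p) * Cp / (2 * p) * α ^ ((6 - p) / 4) * G ^ (3 * (p - 2) / 4) := by ring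
  have hIb := abs_le.mp hI
  have hWb := abs_le.mp hW
  have hGa : 0 ≤ a * (3 * q - 10) / 12 * G := by
    exact mul_nonneg (div_nonneg (mul_nonneg ha.le (by linarith)) (by norm_num)) hG
  have hI2 : -((q - 2) / 4 * I) ≤ (q - 2) / 4 * (K₁ * α) := by
    have h := mul_le_mul_of_nonneg_left (neg_le.mp hIb.1) (show (0:ℝ) ≤ (q - 2) / 4 by linarith)
    linarith [h]
  linarith [key, hP3, hGa, hI2, hWb.1]
end
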